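/- For n = 2^d and d ≥ 1, the K_1-structure connectivity and the K_1-substructure connectivity of FDSC_n both equal d + 2; equivalently, the vertex connectivity of FDSC_n is d + 2. -/

import Mathlib

open scoped Classical

namespace FDSC

/-- Vertices of `FDSC_n` with `n = 2^d`: binary strings of length `2^d`. -/
abbrev V (d : ℕ) : Type := Fin (2 ^ d) → Bool

/-- Bit `i` of a vertex (out-of-range bits are `false`). -/
def get {d : ℕ} (u : V d) (i : ℕ) : Bool :=
  if h : i < 2 ^ d then u ⟨i, h⟩ else false

def ofFun {d : ℕ} (f : ℕ → Bool) : V d := fun i => f i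

/-- Flip bit `i`. -/
def flip {d : ℕ} (i : ℕ) (u : V d) : V d :=
  ofFun (fun j => if j = i then !(get u j) else get u j)

/-- The two initial blocks of length `L` coincide (`m₁ = m₂`). -/
def sameHalves {d : ℕ} (L : ℕ) (u : V d) : Prop :=
  ∀ i < L, get u i = get u (i + L)

/-- Swap the two initial blocks of length `L` (`m₂ m₁ m₃`). -/
def swapHalves {d : ℕ} (L : ℕ) (u : V d) : V d :=
  ofFun (fun i => if i < L then get u (i + L)
    else if i < 2 * L then get u (i - L) else get u i)

/-- Complement the two initial blocks of length `L` (`m̄₁ m̄₂ m₃`). -/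
def complHalves {d : ℕ} (L : ℕ) (u : V d) : V d :=
  ofFun (fun i => if i < 2 * L then !(get u i) else get u i)

/-- Divide-and-swap neighbor for block length `L`. -/
noncomputable def dsNeighbor {d : ℕ} (L : ℕ) (u : V d) : V d :=
  if sameHalves L u then complHalves L u else swapHalves L u

/-- Adjacency in `FDSC_n`: the `e(1)`-edge (flip first bit), the `e(f)`-edge
(flip second bit), and the `e(2n/2^k)`-edges for `1 ≤ k ≤ d`. -/
def PreAdj {d : ℕ} (u v : V d) : Prop :=
  u ≠ v ∧ (v = flip 0 u ∨ v = flip 1 u ∨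
    ∃ k, 1 ≤ k ∧ k ≤ d ∧ v = dsNeighbor (2 ^ (d - k)) u)

/-- The folded divide-and-swap cube `FDSC_n`, `n = 2^d`. -/
noncomputable def graph (d : ℕ) : SimpleGraph (V d) where
  Adj u v := PreAdj u v ∨ PreAdj v u
  symm := ⟨fun _ _ h => h.symm⟩
  loopless := ⟨fun u h => by
    rcases h with h | h <;> exact h.1 rfl⟩

/-- Module addresses: binary strings of length `n/2 = 2^(d-1)`. -/
abbrev W (d : ℕ) : Type := Fin (2 ^ (d - 1)) → Bool

def getW {d : ℕ} (B : W d) (i : ℕ) : Bool :=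
  if h : i < 2 ^ (d - 1) then B ⟨i, h⟩ else false

/-- The vertex `A B` (inside-address `A`, module address `B`). -/
def concat {d : ℕ} (A B : W d) : V d :=
  ofFun (fun i => if i < 2 ^ (d - 1) then getW A i else getW B (i - 2 ^ (d - 1)))

/-- The module address of a vertex (its second half). -/
def secondHalf {d : ℕ} (u : V d) : W d :=
  fun i => get u ((i : ℕ) + 2 ^ (d - 1))

/-- Bitwise complement of a module address. -/
def complW {d : ℕ} (B : W d) : W d := fun i => !(B i)

/-- The external neighbor of a vertex: the `e(n)`-edge endpoint (`k = 1`). -/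
noncomputable def extNeighbor {d : ℕ} (u : V d) : V d :=
  dsNeighbor (2 ^ (d - 1)) u

/-- The star `K_{1,m}` with center `0`. -/
def star (m : ℕ) : SimpleGraph (Fin (m + 1)) where
  Adj i j := (i = 0 ∧ j ≠ 0) ∨ (j = 0 ∧ i ≠ 0)
  symm := ⟨fun _ _ h => h.symm⟩
  loopless := ⟨fun i h => by
    rcases h with ⟨h1, h2⟩ | ⟨h1, h2⟩ <;> exact h2 h1⟩

/-- Deleting the vertex set `R` disconnects the graph or leaves a trivial graph. -/
def Disconnects {α : Type*} (G : SimpleGraph α) (R : Set α) : Prop :=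
  ¬ (G.induce Rᶜ).Connected ∨ Rᶜ.Subsingleton

/-- `H`-structure connectivity: minimum number of subgraphs of `G`, each
isomorphic to `H`, whose vertex deletion disconnects `G` or leaves a trivial graph. -/
noncomputable def structConn {α β : Type*} (G : SimpleGraph α) (H : SimpleGraph β) : ℕ :=
  sInf { k | ∃ F : Finset G.Subgraph, F.card = k ∧
    (∀ S ∈ F, Nonempty (S.coe ≃g H)) ∧
    Disconnects G (⋃ S ∈ F, S.verts) }

/-- `H`-substructure connectivity: members are isomorphic to connected subgraphs of `H`. -/
noncomputable def substructConn {α β : Type*} (G : SimpleGraph α) (H : SimpleGraph β) : ℕ :=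
  sInf { k | ∃ F : Finset G.Subgraph, F.card = k ∧
    (∀ S ∈ F, S.coe.Connected ∧ ∃ H' : H.Subgraph, Nonempty (S.coe ≃g H'.coe)) ∧
    Disconnects G (⋃ S ∈ F, S.verts) }

-- basic API
theorem get_def {d : ℕ} (u : V d) {i : ℕ} (h : i < 2 ^ d) : get u i = u ⟨i, h⟩ := dif_pos h

theorem get_ge {d : ℕ} (u : V d) {i : ℕ} (h : ¬ i < 2 ^ d) : get u i = false := dif_neg h

theorem ext_get {d : ℕ} {u v : V d} (h : ∀ i, get u i = get v i) : u = v := by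
  funext j
  have := h j
  rwa [get_def u j.2, get_def v j.2, Fin.eta] at this

theorem get_ofFun {d : ℕ} (f : ℕ → Bool) (i : ℕ) :
    get (ofFun (d := d) f) i = if i < 2 ^ d then f i else false := by
  unfold get ofFun
  split <;> simp

theorem get_flip {d : ℕ} (i : ℕ) (u : V d) (j : ℕ) :
    get (flip i u) j = if j < 2 ^ d then (if j = i then !(get u j) else get u j) else false := by
  rw [flip, get_ofFun]

theorem flip_flip {d : ℕ} (i : ℕ) (u : V d) : flip i (flip i u) = u := by
  apply ext_get
  intro j
  rw [get_flip, get_flip]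
  by_cases hj : j < 2 ^ d
  · simp only [hj, if_true]
    by_cases hji : j = i <;> simp [hji]
  · simp [hj, get_ge u hj]

theorem get_compl {d : ℕ} (L : ℕ) (u : V d) (j : ℕ) :
    get (complHalves L u) j =
      if j < 2 ^ d then (if j < 2 * L then !(get u j) else get u j) else false := by
  rw [complHalves, get_ofFun]

theorem get_swap {d : ℕ} (L : ℕ) (u : V d) (j : ℕ) :
    get (swapHalves L u) j =
      if j < 2 ^ d then
        (if j < L then get u (j + L) else if j < 2 * L then get u (j - L) else get u j)
      else false := by
  rw [swapHalves, get_ofFun]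

theorem sameHalves_compl {d : ℕ} {L : ℕ} (hL : 2 * L ≤ 2 ^ d) (u : V d) :
    sameHalves L (complHalves L u) ↔ sameHalves L u := by
  have key : ∀ i < L, get (complHalves L u) i = !(get u i) ∧
      get (complHalves L u) (i + L) = !(get u (i + L)) := by
    intro i hi
    have h1 : i < 2 * L := by omega
    have h2 : i + L < 2 * L := by omega
    constructor <;> rw [get_compl] <;> simp only [if_pos (by omega : i < 2 ^ d), if_pos h1,
      if_pos (by omega : i + L < 2 ^ d), if_pos h2]
  constructor
  · intro h i hi
    have := h i hi
    rw [(key i hi).1, (key i hi).2] at this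
    simpa using this
  · intro h i hi
    rw [(key i hi).1, (key i hi).2, h i hi]

theorem sameHalves_swap {d : ℕ} {L : ℕ} (hL : 2 * L ≤ 2 ^ d) (u : V d) :
    sameHalves L (swapHalves L u) ↔ sameHalves L u := by
  have key : ∀ i < L, get (swapHalves L u) i = get u (i + L) ∧
      get (swapHalves L u) (i + L) = get u i := by
    intro i hi
    constructor
    · rw [get_swap]
      simp only [if_pos (by omega : i < 2 ^ d), if_pos hi]
    · rw [get_swap]
      rw [if_pos (by omega : i + L < 2 ^ d), if_neg (by omega : ¬ i + L < L),
        if_pos (by omega : i + L < 2 * L)]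
      congr 1
      omega
  constructor
  · intro h i hi
    have := h i hi
    rw [(key i hi).1, (key i hi).2] at this
    exact this.symm
  · intro h i hi
    rw [(key i hi).1, (key i hi).2, h i hi]

theorem compl_compl {d : ℕ} (L : ℕ) (u : V d) : complHalves L (complHalves L u) = u := by
  apply ext_get
  intro j
  rw [get_compl, get_compl]
  by_cases hj : j < 2 ^ d
  · simp only [hj, if_true]
    by_cases h2 : j < 2 * L <;> simp [h2]
  · simp [hj, get_ge u hj]

theorem swap_swap {d : ℕ} {L : ℕ} (hL : 2 * L ≤ 2 ^ d) (u : V d) :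
    swapHalves L (swapHalves L u) = u := by
  apply ext_get
  intro j
  rw [get_swap]
  by_cases hj : j < 2 ^ d
  · rw [if_pos hj]
    by_cases h1 : j < L
    · rw [if_pos h1, get_swap, if_pos (by omega : j + L < 2 ^ d),
        if_neg (by omega : ¬ j + L < L), if_pos (by omega : j + L < 2 * L)]
      congr 1
      omega
    · by_cases h2 : j < 2 * L
      · rw [if_neg h1, if_pos h2, get_swap, if_pos (by omega : j - L < 2 ^ d),
          if_pos (by omega : j - L < L)]
        congr 1
        omega
      · rw [if_neg h1, if_neg h2, get_swap, if_pos hj, if_neg h1, if_neg h2]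
  · rw [if_neg hj, get_ge u hj]

theorem dsNeighbor_invol {d : ℕ} {L : ℕ} (hL : 2 * L ≤ 2 ^ d) (u : V d) :
    dsNeighbor L (dsNeighbor L u) = u := by
  by_cases h : sameHalves L u
  · have h1 : dsNeighbor L u = complHalves L u := if_pos h
    rw [h1, dsNeighbor, if_pos ((sameHalves_compl hL u).mpr h), compl_compl]
  · have h1 : dsNeighbor L u = swapHalves L u := if_neg h
    rw [h1, dsNeighbor, if_neg (fun hc => h ((sameHalves_swap hL u).mp hc)), swap_swap hL]


theorem twoL_le {d k : ℕ} (hk1 : 1 ≤ k) (hkd : k ≤ d) : 2 * 2 ^ (d - k) ≤ 2 ^ d := by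
  have h1 : 2 * 2 ^ (d - k) = 2 ^ (d - k + 1) := (pow_succ 2 (d - k)).symm ▸ by ring
  rw [h1]
  exact Nat.pow_le_pow_right (by norm_num) (by omega)

theorem adj_iff {d : ℕ} (hd : 1 ≤ d) {u v : V d} :
    (graph d).Adj u v ↔ u ≠ v ∧ (v = flip 0 u ∨ v = flip 1 u ∨
      ∃ k, 1 ≤ k ∧ k ≤ d ∧ v = dsNeighbor (2 ^ (d - k)) u) := by
  constructor
  · rintro (h | h : PreAdj u v ∨ PreAdj v u)
    · exact h
    · obtain ⟨hne, h⟩ := h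
      refine ⟨hne.symm, ?_⟩
      rcases h with h | h | ⟨k, hk1, hkd, h⟩
      · exact Or.inl (by rw [h, flip_flip])
      · exact Or.inr (Or.inl (by rw [h, flip_flip]))
      · exact Or.inr (Or.inr ⟨k, hk1, hkd, by rw [h, dsNeighbor_invol (twoL_le hk1 hkd)]⟩)
  · intro h
    show PreAdj u v ∨ PreAdj v u
    exact Or.inl h

theorem adj_symm_gen {d : ℕ} {u v : V d} (h : PreAdj u v) : (graph d).Adj u v := by
  show PreAdj u v ∨ PreAdj v u
  exact Or.inl h

-- concat / module API
theorem n_eq {d : ℕ} (hd : 1 ≤ d) : 2 ^ d = 2 * 2 ^ (d - 1) := by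
  have h : 2 ^ (d - 1 + 1) = 2 ^ (d - 1) * 2 := pow_succ 2 (d - 1)
  rw [Nat.sub_add_cancel hd] at h
  omega

theorem getW_eq_get {d : ℕ} (B : W d) (i : ℕ) : getW B i = get (d := d - 1) B i := rfl

theorem get_concat_lt {d : ℕ} (A B : W d) {j : ℕ} (hj : j < 2 ^ (d - 1)) :
    get (concat A B) j = get (d := d - 1) A j := by
  have hj2 : j < 2 ^ d := lt_of_lt_of_le hj (Nat.pow_le_pow_right (by norm_num) (by omega))
  rw [concat, get_ofFun, if_pos hj2, if_pos hj, getW_eq_get]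

theorem get_concat_ge {d : ℕ} (A B : W d) {j : ℕ} (h1 : 2 ^ (d - 1) ≤ j) (h2 : j < 2 ^ d) :
    get (concat A B) j = get (d := d - 1) B (j - 2 ^ (d - 1)) := by
  rw [concat, get_ofFun, if_pos h2, if_neg (by omega), getW_eq_get]

def firstHalf {d : ℕ} (u : V d) : W d := fun i => get u i

theorem get_concat_out {d : ℕ} (A B : W d) {j : ℕ} (hj : ¬ j < 2 ^ d) :
    get (concat A B) j = false := by
  show get (ofFun _) j = false
  rw [get_ofFun, if_neg hj]

theorem secondHalf_concat {d : ℕ} (hd : 1 ≤ d) (A B : W d) : secondHalf (concat A B) = B := by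
  funext i
  have hi : (i : ℕ) < 2 ^ (d - 1) := i.2
  rw [secondHalf, get_concat_ge A B (by omega) (by rw [n_eq hd]; omega)]
  have e : (i : ℕ) + 2 ^ (d - 1) - 2 ^ (d - 1) = (i : ℕ) := by omega
  rw [e, get, dif_pos hi]

theorem firstHalf_concat {d : ℕ} (A B : W d) : firstHalf (concat A B) = A := by
  funext i
  have hi : (i : ℕ) < 2 ^ (d - 1) := i.2
  rw [firstHalf]
  show get (concat A B) (i : ℕ) = A i
  rw [get_concat_lt A B hi, get, dif_pos hi]

theorem concat_eq {d : ℕ} (hd : 1 ≤ d) (u : V d) : concat (firstHalf u) (secondHalf u) = u := by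
  apply ext_get
  intro j
  by_cases hj : j < 2 ^ d
  · by_cases h1 : j < 2 ^ (d - 1)
    · rw [get_concat_lt _ _ h1, get_def (d := d - 1) _ h1, firstHalf]
    · rw [get_concat_ge _ _ (by omega) hj]
      have h2 : j - 2 ^ (d - 1) < 2 ^ (d - 1) := by
        have := n_eq hd
        omega
      rw [get, dif_pos h2]
      show get u ((j - 2 ^ (d - 1)) + 2 ^ (d - 1)) = get u j
      congr 1
      omega
  · rw [get_concat_out _ _ hj, get_ge u hj]

theorem concat_inj {d : ℕ} (hd : 1 ≤ d) {A B A' B' : W d} (h : concat A B = concat A' B') :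
    A = A' ∧ B = B' := by
  constructor
  · rw [← firstHalf_concat A B, h, firstHalf_concat]
  · rw [← secondHalf_concat hd A B, h, secondHalf_concat hd]

theorem flip_concat {d : ℕ} (hd : 1 ≤ d) {i : ℕ} (hi : i < 2 ^ (d - 1)) (A B : W d) :
    flip i (concat A B) = concat (flip (d := d - 1) i A) B := by
  apply ext_get
  intro j
  rw [get_flip]
  by_cases hj : j < 2 ^ d
  · rw [if_pos hj]
    by_cases h1 : j < 2 ^ (d - 1)
    · rw [get_concat_lt _ _ h1, get_concat_lt _ _ h1, get_flip, if_pos h1]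
    · rw [if_neg (by omega : ¬ j = i), get_concat_ge _ _ (by omega) hj,
        get_concat_ge _ _ (by omega) hj]
  · rw [if_neg hj, get_concat_out _ _ hj]

theorem complHalves_concat {d : ℕ} (hd : 1 ≤ d) {L : ℕ} (hL : 2 * L ≤ 2 ^ (d - 1)) (A B : W d) :
    complHalves L (concat A B) = concat (complHalves (d := d - 1) L A) B := by
  apply ext_get
  intro j
  rw [get_compl]
  by_cases hj : j < 2 ^ d
  · rw [if_pos hj]
    by_cases h1 : j < 2 ^ (d - 1)
    · rw [get_concat_lt _ _ h1, get_concat_lt _ _ h1, get_compl, if_pos h1]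
    · rw [if_neg (by omega : ¬ j < 2 * L), get_concat_ge _ _ (by omega) hj,
        get_concat_ge _ _ (by omega) hj]
  · rw [if_neg hj, get_concat_out _ _ hj]

theorem swapHalves_concat {d : ℕ} (hd : 1 ≤ d) {L : ℕ} (hL : 2 * L ≤ 2 ^ (d - 1)) (A B : W d) :
    swapHalves L (concat A B) = concat (swapHalves (d := d - 1) L A) B := by
  apply ext_get
  intro j
  rw [get_swap]
  by_cases hj : j < 2 ^ d
  · rw [if_pos hj]
    by_cases h1 : j < 2 ^ (d - 1)
    · rw [get_concat_lt (swapHalves (d := d - 1) L A) B h1, get_swap, if_pos h1]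
      by_cases ha : j < L
      · rw [if_pos ha, if_pos ha, get_concat_lt _ _ (by omega)]
      · by_cases hb : j < 2 * L
        · rw [if_neg ha, if_neg ha, if_pos hb, if_pos hb, get_concat_lt _ _ (by omega)]
        · rw [if_neg ha, if_neg ha, if_neg hb, if_neg hb, get_concat_lt _ _ h1]
    · rw [if_neg (by omega : ¬ j < L), if_neg (by omega : ¬ j < 2 * L),
        get_concat_ge _ _ (by omega) hj, get_concat_ge _ _ (by omega) hj]
  · rw [if_neg hj, get_concat_out _ _ hj]

theorem sameHalves_concat {d : ℕ} (hd : 1 ≤ d) {L : ℕ} (hL : 2 * L ≤ 2 ^ (d - 1)) (A B : W d) :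
    sameHalves L (concat A B) ↔ sameHalves (d := d - 1) L A := by
  constructor
  · intro h i hi
    have := h i hi
    rwa [get_concat_lt _ _ (by omega), get_concat_lt _ _ (by omega)] at this
  · intro h i hi
    rw [get_concat_lt _ _ (by omega), get_concat_lt _ _ (by omega)]
    exact h i hi

theorem dsNeighbor_concat {d : ℕ} (hd : 1 ≤ d) {L : ℕ} (hL : 2 * L ≤ 2 ^ (d - 1)) (A B : W d) :
    dsNeighbor L (concat A B) = concat (dsNeighbor (d := d - 1) L A) B := by
  by_cases h : sameHalves (d := d - 1) L A
  · rw [dsNeighbor, if_pos ((sameHalves_concat hd hL A B).mpr h),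
      dsNeighbor, if_pos h, complHalves_concat hd hL]
  · rw [dsNeighbor, if_neg (fun hc => h ((sameHalves_concat hd hL A B).mp hc)),
      dsNeighbor, if_neg h, swapHalves_concat hd hL]

-- external neighbor API
theorem ext_getW {d : ℕ} {A B : W d} (h : ∀ i < 2 ^ (d - 1), get (d := d - 1) A i = get B i) :
    A = B := by
  apply ext_get (d := d - 1)
  intro i
  by_cases hi : i < 2 ^ (d - 1)
  · exact h i hi
  · rw [get_ge _ hi, get_ge _ hi]

theorem sameHalves_half {d : ℕ} (hd : 1 ≤ d) (A B : W d) :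
    sameHalves (2 ^ (d - 1)) (concat A B) ↔ A = B := by
  have hn := n_eq hd
  constructor
  · intro h
    apply ext_getW
    intro i hi
    have := h i hi
    rwa [get_concat_lt _ _ hi, get_concat_ge _ _ (by omega) (by omega),
      (by omega : i + 2 ^ (d - 1) - 2 ^ (d - 1) = i)] at this
  · rintro rfl i hi
    rw [get_concat_lt _ _ hi, get_concat_ge _ _ (by omega) (by omega),
      (by omega : i + 2 ^ (d - 1) - 2 ^ (d - 1) = i)]

theorem extNeighbor_concat_ne {d : ℕ} (hd : 1 ≤ d) {A B : W d} (h : A ≠ B) :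
    extNeighbor (concat A B) = concat B A := by
  have hn := n_eq hd
  rw [extNeighbor, dsNeighbor, if_neg (fun hc => h ((sameHalves_half hd A B).mp hc))]
  apply ext_get
  intro j
  rw [get_swap]
  by_cases hj : j < 2 ^ d
  · rw [if_pos hj]
    by_cases h1 : j < 2 ^ (d - 1)
    · rw [if_pos h1, get_concat_lt _ _ h1, get_concat_ge _ _ (by omega) (by omega),
        (by omega : j + 2 ^ (d - 1) - 2 ^ (d - 1) = j)]
    · rw [if_neg h1, if_pos (by omega : j < 2 * 2 ^ (d - 1)),
        get_concat_lt _ _ (by omega : j - 2 ^ (d - 1) < 2 ^ (d - 1)),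
        get_concat_ge _ _ (by omega) hj]
  · rw [if_neg hj, get_concat_out _ _ hj]

theorem getW_complW {d : ℕ} (B : W d) (i : ℕ) :
    get (d := d - 1) (complW B) i = if i < 2 ^ (d - 1) then !(get (d := d - 1) B i) else false := by
  by_cases hi : i < 2 ^ (d - 1)
  · rw [if_pos hi, get, dif_pos hi, get, dif_pos hi, complW]
  · rw [if_neg hi, get, dif_neg hi]

theorem extNeighbor_concat_eq {d : ℕ} (hd : 1 ≤ d) (B : W d) :
    extNeighbor (concat B B) = concat (complW B) (complW B) := by
  have hn := n_eq hd
  rw [extNeighbor, dsNeighbor, if_pos ((sameHalves_half hd B B).mpr rfl)]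
  apply ext_get
  intro j
  rw [get_compl]
  by_cases hj : j < 2 ^ d
  · rw [if_pos hj, if_pos (by omega : j < 2 * 2 ^ (d - 1))]
    by_cases h1 : j < 2 ^ (d - 1)
    · rw [get_concat_lt _ _ h1, get_concat_lt _ _ h1, getW_complW, if_pos h1]
    · rw [get_concat_ge _ _ (by omega) hj, get_concat_ge _ _ (by omega) hj, getW_complW,
        if_pos (by omega : j - 2 ^ (d - 1) < 2 ^ (d - 1))]
  · rw [if_neg hj, get_concat_out _ _ hj]

theorem complW_ne {d : ℕ} (B : W d) : complW B ≠ B := by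
  intro h
  have h0 : (0 : ℕ) < 2 ^ (d - 1) := Nat.two_pow_pos _
  have := congrFun h ⟨0, h0⟩
  simp [complW] at this

theorem secondHalf_extNeighbor_ne {d : ℕ} (hd : 1 ≤ d) (A B : W d) :
    secondHalf (extNeighbor (concat A B)) ≠ B := by
  by_cases h : A = B
  · subst h
    rw [extNeighbor_concat_eq hd, secondHalf_concat hd]
    exact complW_ne A
  · rw [extNeighbor_concat_ne hd h, secondHalf_concat hd]
    exact h

theorem extNeighbor_ne {d : ℕ} (hd : 1 ≤ d) (A B : W d) :
    extNeighbor (concat A B) ≠ concat A B := by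
  intro h
  have := secondHalf_extNeighbor_ne hd A B
  rw [h, secondHalf_concat hd] at this
  exact this rfl

theorem adj_extNeighbor {d : ℕ} (hd : 1 ≤ d) (A B : W d) :
    (graph d).Adj (concat A B) (extNeighbor (concat A B)) := by
  show PreAdj _ _ ∨ PreAdj _ _
  refine Or.inl ⟨(extNeighbor_ne hd A B).symm, Or.inr (Or.inr ⟨1, le_refl 1, hd, ?_⟩)⟩
  rw [extNeighbor]

theorem adj_concat {d : ℕ} (hd : 2 ≤ d) {A A' : W d} (B : W d)
    (h : (graph (d - 1)).Adj A A') : (graph d).Adj (concat A B) (concat A' B) := by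
  have hd1 : 1 ≤ d - 1 := by omega
  rw [adj_iff hd1] at h
  obtain ⟨hne, h⟩ := h
  show PreAdj _ _ ∨ PreAdj _ _
  refine Or.inl ⟨fun hc => hne ((concat_inj (by omega) hc).1), ?_⟩
  rcases h with h | h | ⟨k, hk1, hkd, h⟩
  · exact Or.inl (by rw [h, flip_concat (by omega) (Nat.two_pow_pos _)])
  · refine Or.inr (Or.inl ?_)
    rw [h, flip_concat (by omega) (Nat.one_lt_two_pow_iff.mpr (by omega))]
  · refine Or.inr (Or.inr ⟨k + 1, by omega, by omega, ?_⟩)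
    rw [h, (by omega : d - (k + 1) = d - 1 - k), dsNeighbor_concat (by omega) (twoL_le hk1 hkd)]

-- abstract connectivity
theorem connected_of_crossing {α : Type*} [Nonempty α] {G : SimpleGraph α}
    (h : ∀ T : Set α, T.Nonempty → Tᶜ.Nonempty → ∃ a ∈ T, ∃ b ∈ Tᶜ, G.Adj a b) :
    G.Connected := by
  rw [SimpleGraph.connected_iff]
  refine ⟨fun u v => ?_, ‹_›⟩
  by_contra hr
  obtain ⟨a, ha, b, hb, hab⟩ := h {x | G.Reachable u x} ⟨u, SimpleGraph.Reachable.refl u⟩ ⟨v, hr⟩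
  exact hb (ha.trans hab.reachable)

theorem crossing_of_connected {α : Type*} {G : SimpleGraph α} (h : G.Connected)
    {T : Set α} (h1 : T.Nonempty) (h2 : Tᶜ.Nonempty) :
    ∃ a ∈ T, ∃ b ∈ Tᶜ, G.Adj a b := by
  by_contra hc
  push_neg at hc
  obtain ⟨a, ha⟩ := h1
  obtain ⟨b, hb⟩ := h2
  have key : ∀ (x y : α) (_ : G.Walk x y), x ∈ T → y ∈ T := by
    intro x y w
    induction w with
    | nil => exact id
    | @cons u v w' adj p ih =>
      intro hu
      by_cases hv : v ∈ T
      · exact ih hv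
      · exact absurd adj (hc u hu v hv)
  exact hb (key a b (h.preconnected a b).some ha)

-- base case
theorem ext1 {u v : V 1} (h0 : get u 0 = get v 0) (h1 : get u 1 = get v 1) : u = v := by
  apply ext_get
  intro i
  match i with
  | 0 => exact h0
  | 1 => exact h1
  | (n + 2) => rw [get_ge u (by norm_num; omega), get_ge v (by norm_num; omega)]

theorem sameHalves_one {u : V 1} : sameHalves 1 u ↔ get u 0 = get u 1 := by
  constructor
  · intro h
    exact h 0 (by norm_num)
  · intro h i hi
    have : i = 0 := by omega
    subst this
    exact h

theorem graph_one {u v : V 1} (h : u ≠ v) : (graph 1).Adj u v := by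
  have b1 : ∀ a b : Bool, a ≠ b → b = !a := by decide
  have b2 : ∀ a b c : Bool, a ≠ b → c ≠ b → a = c := by decide
  show PreAdj _ _ ∨ PreAdj _ _
  refine Or.inl ⟨h, ?_⟩
  have h2 : (0:ℕ) < 2 ^ 1 := by norm_num
  have h2' : (1:ℕ) < 2 ^ 1 := by norm_num
  by_cases h00 : get u 0 = get v 0
  · by_cases h11 : get u 1 = get v 1
    · exact absurd (ext1 h00 h11) h
    · refine Or.inr (Or.inl (ext1 ?_ ?_))
      · rw [get_flip, if_pos h2, if_neg (by norm_num)]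
        exact h00.symm
      · rw [get_flip, if_pos h2', if_pos rfl]
        exact b1 _ _ h11
  · by_cases h11 : get u 1 = get v 1
    · refine Or.inl (ext1 ?_ ?_)
      · rw [get_flip, if_pos h2, if_pos rfl]
        exact b1 _ _ h00
      · rw [get_flip, if_pos h2', if_neg (by norm_num)]
        exact h11.symm
    · refine Or.inr (Or.inr ⟨1, le_refl 1, le_refl 1, ?_⟩)
      rw [(by norm_num : (2:ℕ) ^ (1 - 1) = 1), dsNeighbor]
      by_cases hs : sameHalves 1 u
      · rw [if_pos hs]
        refine (ext1 ?_ ?_).symm <;> rw [get_compl]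
        · rw [if_pos h2, if_pos (by norm_num : (0:ℕ) < 2 * 1)]
          exact (b1 _ _ h00).symm
        · rw [if_pos h2', if_pos (by norm_num : (1:ℕ) < 2 * 1)]
          exact (b1 _ _ h11).symm
      · rw [if_neg hs]
        rw [sameHalves_one] at hs
        refine (ext1 ?_ ?_).symm <;> rw [get_swap]
        · rw [if_pos h2, if_pos (by norm_num : (0:ℕ) < 1)]
          exact b2 _ _ _ (fun hc => hs hc.symm) (fun hc => h00 hc.symm)
        · rw [if_pos h2', if_neg (by norm_num : ¬ (1:ℕ) < 1),
            if_pos (by norm_num : (1:ℕ) < 2 * 1)]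
          show get u (1 - 1) = get v 1
          exact b2 _ _ _ (fun hc => hs hc) (fun hc => h11 hc.symm)

-- cardinality facts
theorem card_V {d : ℕ} : Fintype.card (V d) = 2 ^ (2 ^ d) := by
  simp [Fintype.card_fun]

theorem card_V_ge {d : ℕ} (hd : 1 ≤ d) : d + 3 ≤ Fintype.card (V d) := by
  rw [card_V]
  have h1 : d < 2 ^ d := Nat.lt_two_pow_self
  by_cases hd1 : d = 1
  · subst hd1
    norm_num
  · calc d + 3 ≤ 2 * (d + 1) := by omega
      _ ≤ 2 * 2 ^ d := by omega
      _ = 2 ^ (d + 1) := by rw [pow_succ]; ring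
      _ ≤ 2 ^ (2 ^ d) := Nat.pow_le_pow_right (by norm_num) (by omega)

theorem card_W {d : ℕ} : Fintype.card (W d) = 2 ^ (2 ^ (d - 1)) := by
  simp [Fintype.card_fun]

-- modules
def Mod {d : ℕ} (B : W d) : Set (V d) := {u | secondHalf u = B}

theorem concat_mem_Mod {d : ℕ} (hd : 1 ≤ d) (A B : W d) : concat A B ∈ Mod B :=
  secondHalf_concat hd A B

theorem Mod_eq {d : ℕ} (hd : 1 ≤ d) {u : V d} {B : W d} (h : u ∈ Mod B) :
    concat (firstHalf u) B = u := by
  have : secondHalf u = B := h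
  rw [← this]
  exact concat_eq hd u

theorem module_crossing {d : ℕ} (hd : 1 ≤ d)
    (IH : ∀ R : Set (V d), R.ncard ≤ d + 1 → ((graph d).induce Rᶜ).Connected)
    (R : Set (V (d + 1))) (B : W (d + 1))
    (hcard : (R ∩ Mod B).ncard ≤ d + 1)
    (T : Set (V (d + 1))) (hT : T ⊆ Mod B ∩ Rᶜ) (hTne : T.Nonempty)
    (hT2 : ((Mod B ∩ Rᶜ) \ T).Nonempty) :
    ∃ a ∈ T, ∃ b ∈ (Mod B ∩ Rᶜ) \ T, (graph (d + 1)).Adj a b := by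
  classical
  set R' : Set (V d) := {A : V d | concat (d := d + 1) A B ∈ R} with hR'def
  have hinj : Function.Injective (fun A : V d => concat (d := d + 1) A B) :=
    fun a b h => (concat_inj (by omega) h).1
  have hR'card : R'.ncard ≤ d + 1 := by
    rw [← Set.ncard_image_of_injective R' hinj]
    refine le_trans (Set.ncard_le_ncard ?_ (Set.toFinite _)) hcard
    rintro x ⟨A, hA, rfl⟩
    exact ⟨hA, concat_mem_Mod (by omega) A B⟩
  have H := IH R' hR'card
  set T' : Set ↥(R'ᶜ) := {x | concat (d := d + 1) (x : V d) B ∈ T} with hT'def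
  obtain ⟨t, ht⟩ := hTne
  obtain ⟨htM, htR⟩ := hT ht
  have h_t : concat (d := d + 1) (firstHalf t) B = t := Mod_eq (by omega) htM
  have hT'ne : T'.Nonempty := by
    refine ⟨⟨firstHalf t, ?_⟩, ?_⟩
    · show ¬ concat (d := d + 1) (firstHalf t) B ∈ R
      rw [h_t]
      exact htR
    · show concat (d := d + 1) (firstHalf t) B ∈ T
      rw [h_t]
      exact ht
  obtain ⟨b, hb⟩ := hT2
  obtain ⟨⟨hbM, hbR⟩, hbT⟩ := hb
  have h_b : concat (d := d + 1) (firstHalf b) B = b := Mod_eq (by omega) hbM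
  have hT'cne : T'ᶜ.Nonempty := by
    refine ⟨⟨firstHalf b, ?_⟩, ?_⟩
    · show ¬ concat (d := d + 1) (firstHalf b) B ∈ R
      rw [h_b]
      exact hbR
    · show ¬ concat (d := d + 1) (firstHalf b) B ∈ T
      rw [h_b]
      exact hbT
  obtain ⟨x, hx, y, hy, hadj⟩ := crossing_of_connected H hT'ne hT'cne
  have hadj' : (graph d).Adj (x : V d) (y : V d) := hadj
  refine ⟨concat (d := d + 1) (x : V d) B, hx, concat (d := d + 1) (y : V d) B,
    ⟨⟨concat_mem_Mod (by omega) _ B, y.2⟩, hy⟩, adj_concat (by omega) B hadj'⟩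

-- more ext-neighbor helpers
theorem ext_invol {d : ℕ} (hd : 1 ≤ d) (u : V d) : extNeighbor (extNeighbor u) = u := by
  rw [extNeighbor, extNeighbor]
  exact dsNeighbor_invol (by rw [← n_eq hd]) u

theorem adj_ext {d : ℕ} (hd : 1 ≤ d) (u : V d) : (graph d).Adj u (extNeighbor u) := by
  have := adj_extNeighbor hd (firstHalf u) (secondHalf u)
  rwa [concat_eq hd] at this

theorem secondHalf_ext_ne {d : ℕ} (hd : 1 ≤ d) (u : V d) :
    secondHalf (extNeighbor u) ≠ secondHalf u := by
  have := secondHalf_extNeighbor_ne hd (firstHalf u) (secondHalf u)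
  rwa [concat_eq hd] at this

theorem complW_complW {d : ℕ} (B : W d) : complW (complW B) = B := by
  funext i
  simp [complW]

theorem target_concat {d : ℕ} (hd : 1 ≤ d) (A B : W d) :
    secondHalf (extNeighbor (concat A B)) = if A = B then complW B else A := by
  by_cases h : A = B
  · subst h
    rw [if_pos rfl, extNeighbor_concat_eq hd, secondHalf_concat hd]
  · rw [if_neg h, extNeighbor_concat_ne hd h, secondHalf_concat hd]

theorem card_univ_W {d : ℕ} (hd : 1 ≤ d) :
    d + 3 ≤ (Set.univ : Set (W (d + 1))).ncard := by
  rw [Set.ncard_univ, Nat.card_eq_fintype_card, card_W]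
  have := card_V_ge hd
  rwa [card_V] at this

theorem X_card {d : ℕ} (hd : 1 ≤ d) (𝒯 : Set (W (d + 1))) (h1 : 𝒯.Nonempty)
    (h2 : 𝒯ᶜ.Nonempty) :
    d + 3 ≤ {u : V (d + 1) | secondHalf u ∈ 𝒯 ∧ secondHalf (extNeighbor u) ∉ 𝒯}.ncard := by
  classical
  set X := {u : V (d + 1) | secondHalf u ∈ 𝒯 ∧ secondHalf (extNeighbor u) ∉ 𝒯} with hX
  have hd1 : (1:ℕ) ≤ d + 1 := by omega
  have hmem : ∀ A B : W (d + 1), B ∈ 𝒯 → (if A = B then complW B else A) ∉ 𝒯 →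
      concat A B ∈ X := by
    intro A B hB htar
    refine ⟨?_, ?_⟩
    · rwa [secondHalf_concat hd1]
    · rwa [target_concat hd1]
  obtain ⟨Bs, hBs⟩ := h1
  obtain ⟨Cs, hCs⟩ := h2
  have key : ∃ φ : W (d + 1) → V (d + 1), Function.Injective φ ∧ ∀ A, φ A ∈ X := by
    by_cases hT1 : ∀ B ∈ 𝒯, B = Bs
    · refine ⟨fun A => concat A Bs, fun a b h => (concat_inj hd1 h).1, fun A => ?_⟩
      refine hmem A Bs hBs ?_
      by_cases hAB : A = Bs
      · rw [if_pos hAB]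
        intro hc
        exact complW_ne Bs (hT1 _ hc)
      · rw [if_neg hAB]
        intro hc
        exact hAB (hT1 _ hc)
    · push_neg at hT1
      obtain ⟨B₂, hB₂, hB₂ne⟩ := hT1
      by_cases hC1 : ∀ C, C ∉ 𝒯 → C = Cs
      · refine ⟨fun A => if A = Cs then concat (complW Cs) (complW Cs) else concat Cs A,
          ?_, ?_⟩
        · intro a b h
          simp only [] at h
          by_cases ha : a = Cs <;> by_cases hb : b = Cs
          · rw [ha, hb]
          · rw [if_pos ha, if_neg hb] at h
            exact absurd (concat_inj hd1 h).1 (complW_ne Cs)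
          · rw [if_neg ha, if_pos hb] at h
            exact absurd (concat_inj hd1 h).1 (fun hc => complW_ne Cs hc.symm)
          · rw [if_neg ha, if_neg hb] at h
            exact (concat_inj hd1 h).2
        · intro A
          simp only []
          by_cases hA : A = Cs
          · rw [if_pos hA]
            have hcc : complW Cs ∈ 𝒯 := by
              by_contra hc
              exact complW_ne Cs (hC1 _ hc)
            refine hmem _ _ hcc ?_
            rw [if_pos rfl, complW_complW]
            exact hCs
          · rw [if_neg hA]
            have hA𝒯 : A ∈ 𝒯 := by
              by_contra hc
              exact hA (hC1 _ hc)
            refine hmem _ _ hA𝒯 ?_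
            rw [if_neg (show ¬ Cs = A from fun hc => hCs (by rw [hc]; exact hA𝒯))]
            exact hCs
      · push_neg at hC1
        obtain ⟨C₂, hC₂, hC₂ne⟩ := hC1
        refine ⟨fun A => if A ∈ 𝒯 then concat Cs A else if A = Cs then concat C₂ B₂
          else concat A Bs, ?_, ?_⟩
        · intro a b h
          simp only [] at h
          by_cases ha : a ∈ 𝒯 <;> by_cases hb : b ∈ 𝒯
          · rw [if_pos ha, if_pos hb] at h
            exact (concat_inj hd1 h).2
          · rw [if_pos ha, if_neg hb] at h
            by_cases hb2 : b = Cs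
            · rw [if_pos hb2] at h
              exact ((hC₂ne (concat_inj hd1 h).1.symm)).elim
            · rw [if_neg hb2] at h
              exact ((hb2 (concat_inj hd1 h).1.symm)).elim
          · rw [if_neg ha, if_pos hb] at h
            by_cases ha2 : a = Cs
            · rw [if_pos ha2] at h
              exact ((hC₂ne (concat_inj hd1 h).1)).elim
            · rw [if_neg ha2] at h
              exact ((ha2 (concat_inj hd1 h).1)).elim
          · rw [if_neg ha, if_neg hb] at h
            by_cases ha2 : a = Cs <;> by_cases hb2 : b = Cs
            · rw [ha2, hb2]
            · rw [if_pos ha2, if_neg hb2] at h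
              exact ((hB₂ne (concat_inj hd1 h).2)).elim
            · rw [if_neg ha2, if_pos hb2] at h
              exact ((hB₂ne (concat_inj hd1 h).2.symm)).elim
            · rw [if_neg ha2, if_neg hb2] at h
              exact (concat_inj hd1 h).1
        · intro A
          simp only []
          by_cases hA : A ∈ 𝒯
          · rw [if_pos hA]
            refine hmem _ _ hA ?_
            rw [if_neg (show ¬ Cs = A from fun hc => hCs (by rw [hc]; exact hA))]
            exact hCs
          · rw [if_neg hA]
            by_cases hA2 : A = Cs
            · rw [if_pos hA2]
              refine hmem _ _ hB₂ ?_
              rw [if_neg (show ¬ C₂ = B₂ from fun hc => hC₂ (by rw [hc]; exact hB₂))]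
              exact hC₂
            · rw [if_neg hA2]
              refine hmem _ _ hBs ?_
              rw [if_neg (show ¬ A = Bs from fun hc => hA (by rw [hc]; exact hBs))]
              exact hA
  obtain ⟨φ, hφinj, hφX⟩ := key
  calc d + 3 ≤ (Set.univ : Set (W (d + 1))).ncard := card_univ_W hd
    _ = (φ '' Set.univ).ncard := (Set.ncard_image_of_injective _ hφinj).symm
    _ ≤ X.ncard := Set.ncard_le_ncard (by rintro x ⟨A, _, rfl⟩; exact hφX A) (Set.toFinite _)

theorem mem_empty_of {α : Type*} {S : Set α} (h : S = ∅) {x : α} (hx : x ∈ S) : False := by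
  rw [h] at hx
  exact hx

theorem Mod_eq_image {d : ℕ} (hd : 1 ≤ d) (B : W d) :
    Mod B = (fun A : W d => concat A B) '' Set.univ := by
  ext u
  constructor
  · intro h
    exact ⟨firstHalf u, Set.mem_univ _, Mod_eq hd h⟩
  · rintro ⟨A, _, rfl⟩
    exact concat_mem_Mod hd A B

theorem Mod_survivor_nonempty {d : ℕ} (hd : 1 ≤ d) (B : W (d + 1)) (R : Set (V (d + 1)))
    (hc : (R ∩ Mod B).ncard ≤ d + 2) : (Mod B ∩ Rᶜ).Nonempty := by
  rw [Set.nonempty_iff_ne_empty]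
  intro hempty
  have hsub : Mod B ⊆ R ∩ Mod B := by
    intro u hu
    refine ⟨?_, hu⟩
    by_contra hR
    exact (mem_empty_of hempty (⟨hu, hR⟩ : u ∈ Mod B ∩ Rᶜ)).elim
  have h1 : (Mod B).ncard ≤ d + 2 := le_trans (Set.ncard_le_ncard hsub (Set.toFinite _)) hc
  have h2 : d + 3 ≤ (Mod B).ncard := by
    rw [Mod_eq_image (by omega) B,
      Set.ncard_image_of_injective _ (fun a b h => (concat_inj (by omega) h).1)]
    exact card_univ_W hd
  omega

theorem step_crossing {d : ℕ} (hd : 1 ≤ d)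
    (IH : ∀ R : Set (V d), R.ncard ≤ d + 1 → ((graph d).induce Rᶜ).Connected)
    (R : Set (V (d + 1))) (hR : R.ncard ≤ d + 2)
    (T : Set (V (d + 1))) (hTsub : T ⊆ Rᶜ) (hTne : T.Nonempty) (hT2 : (Rᶜ \ T).Nonempty) :
    ∃ a ∈ T, ∃ b ∈ Rᶜ \ T, (graph (d + 1)).Adj a b := by
  classical
  have hd1 : (1:ℕ) ≤ d + 1 := by omega
  have hmod : ∀ B : W (d + 1), (R ∩ Mod B).ncard ≤ d + 1 →
      ((Mod B ∩ Rᶜ) ∩ T).Nonempty → ((Mod B ∩ Rᶜ) \ T).Nonempty →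
      ∃ a ∈ T, ∃ b ∈ Rᶜ \ T, (graph (d + 1)).Adj a b := by
    intro B hB hne1 hne2
    have hsub : (Mod B ∩ Rᶜ) ∩ T ⊆ Mod B ∩ Rᶜ := Set.inter_subset_left
    have heq : (Mod B ∩ Rᶜ) \ ((Mod B ∩ Rᶜ) ∩ T) = (Mod B ∩ Rᶜ) \ T := by
      ext x
      constructor
      · rintro ⟨hx1, hx2⟩
        exact ⟨hx1, fun hxT => hx2 ⟨hx1, hxT⟩⟩
      · rintro ⟨hx1, hx2⟩
        exact ⟨hx1, fun hc => hx2 hc.2⟩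
    obtain ⟨a, ha, b, hb, hab⟩ := module_crossing hd IH R B hB ((Mod B ∩ Rᶜ) ∩ T) hsub hne1
      (by rw [heq]; exact hne2)
    exact ⟨a, ha.2, b, ⟨hb.1.2, fun hbT => hb.2 ⟨hb.1, hbT⟩⟩, hab⟩
  by_cases hA : ∃ B₀, d + 2 ≤ (R ∩ Mod B₀).ncard
  · obtain ⟨B₀, hB₀⟩ := hA
    have hRsub : R ⊆ Mod B₀ := by
      have heq : R ∩ Mod B₀ = R :=
        Set.eq_of_subset_of_ncard_le Set.inter_subset_left (le_trans hR hB₀) (Set.toFinite _)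
      intro u hu
      rw [← heq] at hu
      exact hu.2
    have hfree : ∀ B, B ≠ B₀ → Mod B ∩ Rᶜ = Mod B := by
      intro B hB
      ext u
      constructor
      · exact fun h => h.1
      · intro h
        refine ⟨h, fun huR => hB ?_⟩
        exact (h : secondHalf u = B).symm.trans (hRsub huR)
    by_cases h1 : ∃ B, B ≠ B₀ ∧ ((Mod B ∩ Rᶜ) ∩ T).Nonempty ∧ ((Mod B ∩ Rᶜ) \ T).Nonempty
    · obtain ⟨B, hBne, hm1, hm2⟩ := h1
      refine hmod B ?_ hm1 hm2
      have hempty : R ∩ Mod B = ∅ := by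
        ext u
        simp only [Set.mem_inter_iff, Set.mem_empty_iff_false, iff_false, not_and]
        intro huR huB
        exact hBne ((huB : secondHalf u = B).symm.trans (hRsub huR)) |>.elim
      rw [hempty]
      simp
    · push_neg at h1
      have hside : ∀ B, B ≠ B₀ → Mod B ⊆ T ∨ Mod B ∩ T = ∅ := by
        intro B hB
        by_cases ht : (Mod B ∩ T).Nonempty
        · left
          have hmeet : ((Mod B ∩ Rᶜ) ∩ T).Nonempty := by rwa [hfree B hB]
          have hnot := h1 B hB hmeet
          rw [hfree B hB] at hnot
          intro u hu
          by_contra hc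
          exact (mem_empty_of hnot (⟨hu, hc⟩ : u ∈ Mod B \ T)).elim
        · right
          exact Set.not_nonempty_iff_eq_empty.mp ht
      by_cases h2 : ∃ C, C ≠ B₀ ∧ Mod C ∩ T = ∅
      · obtain ⟨C, hCne, hC⟩ := h2
        by_cases h3 : ∃ B, B ≠ B₀ ∧ (Mod B ∩ T).Nonempty
        · obtain ⟨B, hBne, hBT⟩ := h3
          have hBsubT : Mod B ⊆ T := by
            rcases hside B hBne with h | h
            · exact h
            · rw [h] at hBT
              exact absurd hBT (by simp)
          have hBC : C ≠ B := by
            rintro rfl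
            rw [hC] at hBT
            exact absurd hBT (by simp)
          have hu : concat C B ∈ T := hBsubT (concat_mem_Mod hd1 C B)
          have hv : extNeighbor (concat C B) = concat B C := extNeighbor_concat_ne hd1 hBC
          refine ⟨concat C B, hu, concat B C, ⟨?_, ?_⟩, ?_⟩
          · intro hc
            exact hCne ((concat_mem_Mod hd1 B C : secondHalf _ = C).symm.trans (hRsub hc))
          · intro hc
            have hmem : concat B C ∈ Mod C ∩ T := ⟨concat_mem_Mod hd1 B C, hc⟩
            rw [hC] at hmem
            exact hmem
          · rw [← hv]
            exact adj_extNeighbor hd1 C B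
        · push_neg at h3
          obtain ⟨t, ht⟩ := hTne
          have htB₀ : secondHalf t = B₀ := by
            by_contra hc
            exact (mem_empty_of (h3 (secondHalf t) hc)
              (⟨rfl, ht⟩ : t ∈ Mod (secondHalf t) ∩ T)).elim
          have hvne : secondHalf (extNeighbor t) ≠ B₀ := fun hc =>
            secondHalf_ext_ne hd1 t (hc.trans htB₀.symm)
          refine ⟨t, ht, extNeighbor t, ⟨?_, ?_⟩, adj_ext hd1 t⟩
          · intro hc
            exact hvne (hRsub hc)
          · intro hc
            exact (mem_empty_of (h3 (secondHalf (extNeighbor t)) hvne)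
              (⟨rfl, hc⟩ : extNeighbor t ∈ Mod (secondHalf (extNeighbor t)) ∩ T)).elim
      · push_neg at h2
        obtain ⟨b, hb⟩ := hT2
        have hbB₀ : secondHalf b = B₀ := by
          by_contra hc
          rcases hside _ hc with h | h
          · exact hb.2 (h rfl)
          · have hne := h2 _ hc
            rw [h] at hne
            exact (Set.not_nonempty_empty hne).elim
        have hvne : secondHalf (extNeighbor b) ≠ B₀ := fun hc =>
          secondHalf_ext_ne hd1 b (hc.trans hbB₀.symm)
        have hvT : extNeighbor b ∈ T := by
          rcases hside _ hvne with h | h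
          · exact h rfl
          · have hne := h2 _ hvne
            rw [h] at hne
            exact (Set.not_nonempty_empty hne).elim
        exact ⟨extNeighbor b, hvT, b, hb, (adj_ext hd1 b).symm⟩
  · push_neg at hA
    have hA' : ∀ B, (R ∩ Mod B).ncard ≤ d + 1 := fun B => by have := hA B; omega
    by_cases h1 : ∃ B, ((Mod B ∩ Rᶜ) ∩ T).Nonempty ∧ ((Mod B ∩ Rᶜ) \ T).Nonempty
    · obtain ⟨B, hm1, hm2⟩ := h1
      exact hmod B (hA' B) hm1 hm2
    · push_neg at h1
      have hdich : ∀ B, (Mod B ∩ Rᶜ ⊆ T) ∨ (Mod B ∩ Rᶜ) ∩ T = ∅ := by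
        intro B
        by_cases hm : ((Mod B ∩ Rᶜ) ∩ T).Nonempty
        · left
          have hnot := h1 B hm
          intro u hu
          by_contra hc
          exact (mem_empty_of hnot (⟨hu, hc⟩ : u ∈ (Mod B ∩ Rᶜ) \ T)).elim
        · right
          exact Set.not_nonempty_iff_eq_empty.mp hm
      set 𝒯 := {B : W (d + 1) | Mod B ∩ Rᶜ ⊆ T} with h𝒯def
      have h𝒯ne : 𝒯.Nonempty := by
        obtain ⟨t, ht⟩ := hTne
        refine ⟨secondHalf t, ?_⟩
        rcases hdich (secondHalf t) with h | h
        · exact h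
        · exact (mem_empty_of h
            (⟨⟨rfl, hTsub ht⟩, ht⟩ : t ∈ (Mod (secondHalf t) ∩ Rᶜ) ∩ T)).elim
      have h𝒯cne : 𝒯ᶜ.Nonempty := by
        obtain ⟨b, hb⟩ := hT2
        exact ⟨secondHalf b, fun hc => hb.2 (hc ⟨rfl, hb.1⟩)⟩
      have hX := X_card hd 𝒯 h𝒯ne h𝒯cne
      set X := {u : V (d + 1) | secondHalf u ∈ 𝒯 ∧ secondHalf (extNeighbor u) ∉ 𝒯} with hXdef
      set bad := {u ∈ X | u ∈ R ∨ extNeighbor u ∈ R} with hbaddef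
      have hbadcard : bad.ncard ≤ d + 2 := by
        have hinj : Set.InjOn (fun u => if u ∈ R then u else extNeighbor u) bad := by
          intro a ha b hb hab
          simp only [] at hab
          by_cases haR : a ∈ R <;> by_cases hbR : b ∈ R
          · rwa [if_pos haR, if_pos hbR] at hab
          · rw [if_pos haR, if_neg hbR] at hab
            exfalso
            have hb' : extNeighbor a = b := by rw [hab, ext_invol hd1]
            exact ha.1.2 (hb' ▸ hb.1.1)
          · rw [if_neg haR, if_pos hbR] at hab
            exfalso
            have ha' : extNeighbor b = a := by rw [← hab, ext_invol hd1]
            exact hb.1.2 (ha' ▸ ha.1.1)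
          · rw [if_neg haR, if_neg hbR] at hab
            have hcongr := congrArg extNeighbor hab
            rwa [ext_invol hd1, ext_invol hd1] at hcongr
        calc bad.ncard = ((fun u => if u ∈ R then u else extNeighbor u) '' bad).ncard :=
              (Set.ncard_image_of_injOn hinj).symm
          _ ≤ R.ncard := by
              refine Set.ncard_le_ncard ?_ (Set.toFinite _)
              rintro x ⟨u, hu, rfl⟩
              simp only []
              by_cases huR : u ∈ R
              · rwa [if_pos huR]
              · rw [if_neg huR]
                exact hu.2.resolve_left huR
          _ ≤ d + 2 := hR
      have hgood : (X \ bad).Nonempty := by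
        rw [Set.nonempty_iff_ne_empty]
        intro hc
        have hsubbad : X ⊆ bad ∪ (X \ bad) := by
          intro u hu
          by_cases h : u ∈ bad
          · exact Or.inl h
          · exact Or.inr ⟨hu, h⟩
        have hXle : X.ncard ≤ bad.ncard + (X \ bad).ncard :=
          le_trans (Set.ncard_le_ncard hsubbad (Set.toFinite _)) (Set.ncard_union_le _ _)
        rw [hc, Set.ncard_empty] at hXle
        omega
      obtain ⟨u, hugood⟩ := hgood
      obtain ⟨⟨hu𝒯, huext⟩, hubad⟩ := hugood
      have huR : u ∉ R := fun hc => hubad ⟨⟨hu𝒯, huext⟩, Or.inl hc⟩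
      have hextR : extNeighbor u ∉ R := fun hc => hubad ⟨⟨hu𝒯, huext⟩, Or.inr hc⟩
      have huT : u ∈ T := hu𝒯 ⟨rfl, huR⟩
      have hextT : extNeighbor u ∉ T := by
        rcases hdich (secondHalf (extNeighbor u)) with h | h
        · exact absurd h huext
        · intro hc
          exact (mem_empty_of h (⟨⟨rfl, hextR⟩, hc⟩ :
            extNeighbor u ∈ (Mod (secondHalf (extNeighbor u)) ∩ Rᶜ) ∩ T)).elim
      exact ⟨u, huT, extNeighbor u, ⟨hextR, hextT⟩, adj_ext hd1 u⟩

theorem compl_nonempty {d : ℕ} (hd : 1 ≤ d) {R : Set (V d)} (hR : R.ncard ≤ d + 2) :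
    Rᶜ.Nonempty := by
  rw [Set.nonempty_iff_ne_empty]
  intro h
  have huniv : R = Set.univ := by rwa [Set.compl_empty_iff] at h
  rw [huniv, Set.ncard_univ, Nat.card_eq_fintype_card] at hR
  have := card_V_ge hd
  omega

theorem main : ∀ d, 1 ≤ d → ∀ R : Set (V d), R.ncard ≤ d + 1 →
    ((graph d).induce Rᶜ).Connected := by
  intro d hd
  induction d, hd using Nat.le_induction with
  | base =>
    intro R hR
    have hne : Rᶜ.Nonempty := compl_nonempty (by norm_num) (by omega)
    haveI : Nonempty ↥(Rᶜ) := hne.to_subtype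
    apply connected_of_crossing
    intro T h1 h2
    obtain ⟨a, ha⟩ := h1
    obtain ⟨b, hb⟩ := h2
    exact ⟨a, ha, b, hb, graph_one (fun hc => hb (Subtype.ext hc ▸ ha))⟩
  | succ d hd IH =>
    intro R hR
    have hne : Rᶜ.Nonempty := compl_nonempty (by omega) (by omega)
    haveI : Nonempty ↥(Rᶜ) := hne.to_subtype
    apply connected_of_crossing
    intro T hTne hTcne
    set T₀ : Set (V (d + 1)) := Subtype.val '' T with hT₀def
    have hsub : T₀ ⊆ Rᶜ := by
      rintro x ⟨y, hy, rfl⟩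
      exact y.2
    have hT₀ne : T₀.Nonempty := hTne.image _
    have hT₀2 : (Rᶜ \ T₀).Nonempty := by
      obtain ⟨b, hb⟩ := hTcne
      refine ⟨b, b.2, fun hc => ?_⟩
      obtain ⟨y, hy, hyb⟩ := hc
      rw [Subtype.ext hyb] at hy
      exact hb hy
    obtain ⟨a, ha, b, hb, hab⟩ := step_crossing hd IH R hR T₀ hsub hT₀ne hT₀2
    obtain ⟨a', ha', rfl⟩ := ha
    exact ⟨a', ha', ⟨b, hb.1⟩, fun hc => hb.2 ⟨⟨b, hb.1⟩, hc, rfl⟩, hab⟩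

-- the deleted neighborhood of the zero vertex
def zero (d : ℕ) : V d := fun _ => false

theorem get_zero {d : ℕ} (i : ℕ) : get (zero d) i = false := by
  unfold get zero
  split <;> rfl

theorem sameHalves_zero {d : ℕ} (L : ℕ) : sameHalves L (zero d) := by
  intro i _
  rw [get_zero, get_zero]

theorem dsNeighbor_zero {d : ℕ} (L : ℕ) :
    dsNeighbor L (zero d) = complHalves L (zero d) := if_pos (sameHalves_zero L)

theorem get_ds_zero {d : ℕ} (L j : ℕ) :
    get (dsNeighbor L (zero d)) j =
      if j < 2 ^ d then (if j < 2 * L then true else false) else false := by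
  rw [dsNeighbor_zero, get_compl]
  by_cases hj : j < 2 ^ d
  · rw [if_pos hj, if_pos hj]
    by_cases h2 : j < 2 * L
    · rw [if_pos h2, if_pos h2, get_zero]
      rfl
    · rw [if_neg h2, if_neg h2, get_zero]
  · rw [if_neg hj, if_neg hj]

theorem get_flip_zero {d : ℕ} (i j : ℕ) :
    get (flip i (zero d)) j = if j < 2 ^ d then (if j = i then true else false) else false := by
  rw [get_flip]
  by_cases hj : j < 2 ^ d
  · rw [if_pos hj, if_pos hj]
    by_cases h2 : j = i
    · rw [if_pos h2, if_pos h2, get_zero]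
      rfl
    · rw [if_neg h2, if_neg h2, get_zero]
  · rw [if_neg hj, if_neg hj]

noncomputable def Nset (d : ℕ) : Finset (V d) :=
  {flip 0 (zero d), flip 1 (zero d)} ∪
    (Finset.Icc 1 d).image (fun k => dsNeighbor (2 ^ (d - k)) (zero d))

theorem mem_Nset {d : ℕ} {v : V d} :
    v ∈ Nset d ↔ v = flip 0 (zero d) ∨ v = flip 1 (zero d) ∨
      ∃ k, 1 ≤ k ∧ k ≤ d ∧ v = dsNeighbor (2 ^ (d - k)) (zero d) := by
  simp only [Nset, Finset.mem_union, Finset.mem_insert, Finset.mem_singleton,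
    Finset.mem_image, Finset.mem_Icc]
  constructor
  · rintro ((h | h) | ⟨k, ⟨h1, h2⟩, h3⟩)
    · exact Or.inl h
    · exact Or.inr (Or.inl h)
    · exact Or.inr (Or.inr ⟨k, h1, h2, h3.symm⟩)
  · rintro (h | h | ⟨k, h1, h2, h3⟩)
    · exact Or.inl (Or.inl h)
    · exact Or.inl (Or.inr h)
    · exact Or.inr ⟨k, ⟨h1, h2⟩, h3.symm⟩

theorem neighbors_in_Nset {d : ℕ} (hd : 1 ≤ d) {v : V d}
    (h : (graph d).Adj (zero d) v) : v ∈ Nset d := by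
  rw [adj_iff hd] at h
  rw [mem_Nset]
  exact h.2

theorem Nset_bit01 {d : ℕ} (hd : 1 ≤ d) {v : V d} (h : v ∈ Nset d) :
    get v 0 = true ∨ get v 1 = true := by
  have h0 : (0:ℕ) < 2 ^ d := Nat.two_pow_pos _
  have h1 : (1:ℕ) < 2 ^ d := Nat.one_lt_two_pow_iff.mpr (by omega)
  rw [mem_Nset] at h
  rcases h with h | h | ⟨k, hk1, hkd, h⟩
  · left
    rw [h, get_flip_zero, if_pos h0, if_pos rfl]
  · right
    rw [h, get_flip_zero, if_pos h1, if_pos rfl]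
  · left
    rw [h, get_ds_zero, if_pos h0, if_pos (by positivity)]

theorem zero_not_mem_Nset {d : ℕ} (hd : 1 ≤ d) : zero d ∉ Nset d := by
  intro h
  rcases Nset_bit01 hd h with h | h <;> rw [get_zero] at h <;> exact Bool.false_ne_true h

theorem card_Nset {d : ℕ} (hd : 1 ≤ d) : (Nset d).card = d + 2 := by
  classical
  have h0 : (0:ℕ) < 2 ^ d := Nat.two_pow_pos _
  have h1 : (1:ℕ) < 2 ^ d := Nat.one_lt_two_pow_iff.mpr (by omega)
  have hds_ne : ∀ k k', 1 ≤ k → k' ≤ d → k < k' →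
      dsNeighbor (2 ^ (d - k)) (zero d) ≠ dsNeighbor (2 ^ (d - k')) (zero d) := by
    intro k k' hk1 hk'd hkk' hc
    set j := 2 * 2 ^ (d - k') with hjdef
    have hlt : 2 * 2 ^ (d - k') < 2 * 2 ^ (d - k) := by
      have := Nat.pow_lt_pow_right (by norm_num : 1 < 2) (show d - k' < d - k by omega)
      omega
    have hjn : j < 2 ^ d := by
      have he : 2 * 2 ^ (d - k') = 2 ^ (d - k' + 1) := by rw [pow_succ]; ring
      have : 2 ^ (d - k' + 1) ≤ 2 ^ (d - 1) :=
        Nat.pow_le_pow_right (by norm_num) (by omega)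
      have h2 : 2 ^ (d - 1) < 2 ^ d := Nat.pow_lt_pow_right (by norm_num) (by omega)
      omega
    have := congrArg (fun u => get u j) hc
    simp only [get_ds_zero, if_pos hjn] at this
    rw [if_pos hlt, if_neg (by omega : ¬ j < 2 * 2 ^ (d - k'))] at this
    exact Bool.noConfusion this
  have hinj : Set.InjOn (fun k => dsNeighbor (2 ^ (d - k)) (zero d)) ↑(Finset.Icc 1 d) := by
    intro k hk k' hk' heq
    simp only [Finset.coe_Icc, Set.mem_Icc] at hk hk'
    by_contra hne
    rcases Nat.lt_or_ge k k' with h | h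
    · exact hds_ne k k' hk.1 hk'.2 h heq
    · exact hds_ne k' k hk'.1 hk.2 (by omega) heq.symm
  have himcard : ((Finset.Icc 1 d).image (fun k => dsNeighbor (2 ^ (d - k)) (zero d))).card
      = d := by
    rw [Finset.card_image_of_injOn hinj, Nat.card_Icc]
    omega
  have hf0f1 : flip 0 (zero d) ≠ flip 1 (zero d) := by
    intro hc
    have hbit := congrArg (fun u => get u 0) hc
    simp only [get_flip_zero, if_pos h0] at hbit
    norm_num at hbit
  have hdisj : Disjoint ({flip 0 (zero d), flip 1 (zero d)} : Finset (V d))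
      ((Finset.Icc 1 d).image fun k => dsNeighbor (2 ^ (d - k)) (zero d)) := by
    rw [Finset.disjoint_left]
    intro v hv him
    obtain ⟨k, hk, hkv⟩ := Finset.mem_image.mp him
    rw [Finset.mem_Icc] at hk
    rw [Finset.mem_insert, Finset.mem_singleton] at hv
    have hp : (1:ℕ) ≤ 2 ^ (d - k) := Nat.one_le_two_pow
    have hv1 : get v 1 = true := by
      rw [← hkv, get_ds_zero, if_pos h1, if_pos (by omega)]
    have hv0 : get v 0 = true := by
      rw [← hkv, get_ds_zero, if_pos h0, if_pos (by omega)]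
    rcases hv with rfl | rfl
    · rw [get_flip_zero, if_pos h1, if_neg (by norm_num)] at hv1
      exact Bool.noConfusion hv1
    · rw [get_flip_zero, if_pos h0, if_neg (by norm_num)] at hv0
      exact Bool.noConfusion hv0
  rw [Nset, Finset.card_union_of_disjoint hdisj, himcard,
    Finset.card_insert_of_notMem (by rw [Finset.mem_singleton]; exact hf0f1),
    Finset.card_singleton]
  omega

theorem disconnects_Nset {d : ℕ} (hd : 1 ≤ d) : Disconnects (graph d) ↑(Nset d) := by
  classical
  by_cases hd1 : d = 1
  · subst hd1
    right
    intro x hx y hy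
    have hmem : ∀ v : V 1, v ∈ (↑(Nset 1) : Set (V 1))ᶜ → v = zero 1 := by
      intro v hv
      by_contra hne
      exact hv (Finset.mem_coe.mpr
        (neighbors_in_Nset (le_refl 1) (graph_one (fun h => hne h.symm))))
    rw [hmem x hx, hmem y hy]
  · left
    intro hconn
    have hz : zero d ∈ (↑(Nset d) : Set (V d))ᶜ :=
      fun h => zero_not_mem_Nset hd (Finset.mem_coe.mp h)
    have h2n : (2:ℕ) < 2 ^ d := by
      calc (2:ℕ) < 4 := by norm_num
        _ = 2 ^ 2 := by norm_num
        _ ≤ 2 ^ d := Nat.pow_le_pow_right (by norm_num) (by omega)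
    have hw01 : get (flip 2 (zero d)) 0 = false ∧ get (flip 2 (zero d)) 1 = false := by
      constructor <;> rw [get_flip_zero]
      · rw [if_pos (by omega : (0:ℕ) < 2 ^ d), if_neg (by norm_num)]
      · rw [if_pos (by omega : (1:ℕ) < 2 ^ d), if_neg (by norm_num)]
    have hw : flip 2 (zero d) ∈ (↑(Nset d) : Set (V d))ᶜ := by
      intro h
      rcases Nset_bit01 hd (Finset.mem_coe.mp h) with h' | h'
      · rw [hw01.1] at h'
        exact Bool.noConfusion h'
      · rw [hw01.2] at h'
        exact Bool.noConfusion h'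
    have hzw : zero d ≠ flip 2 (zero d) := by
      intro hc
      have hb := congrArg (fun u => get u 2) hc
      simp only [get_zero, get_flip_zero, if_pos h2n] at hb
      simp at hb
    obtain ⟨a, ha, b, hb, hab⟩ := crossing_of_connected hconn
      (T := {(⟨zero d, hz⟩ : ↥(↑(Nset d) : Set (V d))ᶜ)}) ⟨_, rfl⟩
      ⟨⟨flip 2 (zero d), hw⟩, fun hc => hzw (congrArg Subtype.val hc).symm⟩
    have ha' : a = ⟨zero d, hz⟩ := ha
    rw [ha'] at hab
    have hadj : (graph d).Adj (zero d) ((b : ↥(↑(Nset d) : Set (V d))ᶜ) : V d) := hab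
    exact b.2 (Finset.mem_coe.mpr (neighbors_in_Nset hd hadj))

theorem star0_no_adj (i j : Fin 1) : ¬ (star 0).Adj i j := by
  rintro (⟨h1, h2⟩ | ⟨h1, h2⟩ : (i = 0 ∧ j ≠ 0) ∨ (j = 0 ∧ i ≠ 0)) <;> exact h2 (Fin.ext (by omega))

theorem singleton_coe_iso_star {α : Type*} (G : SimpleGraph α) (v : α) :
    Nonempty ((G.singletonSubgraph v).coe ≃g star 0) := by
  refine ⟨⟨⟨fun _ => 0, fun _ => ⟨v, rfl⟩, fun x => Subtype.ext ?_, fun y => ?_⟩, ?_⟩⟩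
  · exact (x.2 : (x : α) = v).symm
  · exact Fin.ext (by omega)
  · intro a b
    constructor
    · intro h
      exact absurd h (star0_no_adj _ _)
    · intro h
      exact absurd h (fun hc => hc)

theorem singleton_coe_iso_sub {α : Type*} (G : SimpleGraph α) (v : α) :
    Nonempty ((G.singletonSubgraph v).coe ≃g ((star 0).singletonSubgraph 0).coe) := by
  refine ⟨⟨⟨fun _ => ⟨0, rfl⟩, fun _ => ⟨v, rfl⟩, fun x => Subtype.ext ?_, fun y =>
    Subtype.ext ?_⟩, ?_⟩⟩
  · exact (x.2 : (x : α) = v).symm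
  · exact (y.2 : (y : Fin (0 + 1)) = 0).symm
  · intro a b
    constructor
    · intro h
      exact absurd h (fun hc => hc)
    · intro h
      exact absurd h (fun hc => hc)

theorem ncard_biUnion_le_card {α β : Type*} (F : Finset α) (f : α → Set β)
    (h : ∀ S ∈ F, (f S).ncard ≤ 1) : (⋃ S ∈ F, f S).ncard ≤ F.card := by
  classical
  induction F using Finset.induction with
  | empty => simp
  | @insert a s ha ih =>
    rw [Finset.set_biUnion_insert]
    refine le_trans (Set.ncard_union_le _ _) ?_
    rw [Finset.card_insert_of_notMem ha]
    have h1 := h a (Finset.mem_insert_self a s)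
    have h2 := ih (fun S hS => h S (Finset.mem_insert_of_mem hS))
    omega

theorem verts_ncard_of_iso_star {d : ℕ} {S : (graph d).Subgraph}
    (h : Nonempty (S.coe ≃g star 0)) : S.verts.ncard = 1 := by
  obtain ⟨iso⟩ := h
  have hcc := Nat.card_congr iso.toEquiv
  rw [Nat.card_coe_set_eq] at hcc
  rw [hcc, Nat.card_eq_fintype_card, Fintype.card_fin]

theorem verts_ncard_of_iso_sub {d : ℕ} {S : (graph d).Subgraph}
    (h : ∃ H' : (star 0).Subgraph, Nonempty (S.coe ≃g H'.coe)) : S.verts.ncard ≤ 1 := by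
  obtain ⟨H', ⟨iso⟩⟩ := h
  have h1 := Nat.card_congr iso.toEquiv
  rw [Nat.card_coe_set_eq, Nat.card_coe_set_eq] at h1
  rw [h1]
  have h2 : H'.verts.ncard ≤ (Set.univ : Set (Fin 1)).ncard :=
    Set.ncard_le_ncard (Set.subset_univ _) (Set.toFinite _)
  rwa [Set.ncard_univ, Nat.card_eq_fintype_card, Fintype.card_fin] at h2

theorem lower_bound {d : ℕ} (hd : 1 ≤ d) {k : ℕ} (F : Finset ((graph d).Subgraph))
    (hcard : F.card = k) (hverts : ∀ S ∈ F, S.verts.ncard ≤ 1)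
    (hdis : Disconnects (graph d) (⋃ S ∈ F, S.verts)) : d + 2 ≤ k := by
  by_contra hlt
  push_neg at hlt
  set R := ⋃ S ∈ F, S.verts with hRdef
  have hRcard : R.ncard ≤ d + 1 := by
    have hle : R.ncard ≤ F.card := by
      have hh := ncard_biUnion_le_card F (fun S => S.verts) hverts
      simpa using hh
    omega
  rcases hdis with hdis | hdis
  · exact hdis (main d hd R hRcard)
  · have hsub : Rᶜ.ncard ≤ 1 := by
      rcases hdis.eq_empty_or_singleton with h | ⟨x, h⟩
      · rw [h, Set.ncard_empty]
        omega
      · rw [h, Set.ncard_singleton]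
    have huniv : (Set.univ : Set (V d)).ncard ≤ R.ncard + Rᶜ.ncard := by
      refine le_trans (Set.ncard_le_ncard ?_ (Set.toFinite _)) (Set.ncard_union_le _ _)
      intro x _
      by_cases h : x ∈ R
      · exact Or.inl h
      · exact Or.inr h
    rw [Set.ncard_univ, Nat.card_eq_fintype_card] at huniv
    have := card_V_ge hd
    omega

/-- `κ(FDSC_n; K₁) = κˢ(FDSC_n; K₁) = d + 2` for `d ≥ 1`. -/
theorem stmt13 (d : ℕ) (hd : 1 ≤ d) :
    structConn (graph d) (star 0) = d + 2 ∧
    substructConn (graph d) (star 0) = d + 2 := by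
  classical
  set F : Finset ((graph d).Subgraph) :=
    (Nset d).image (fun v => (graph d).singletonSubgraph v) with hFdef
  have hFcard : F.card = d + 2 := by
    rw [hFdef, Finset.card_image_of_injective _ ?inj, card_Nset hd]
    case inj =>
      intro a b h
      have hv := congrArg SimpleGraph.Subgraph.verts h
      simpa [SimpleGraph.singletonSubgraph_verts, Set.singleton_eq_singleton_iff] using hv
  have hFunion : (⋃ S ∈ F, S.verts) = ↑(Nset d) := by
    ext u
    simp only [Set.mem_iUnion, exists_prop, hFdef, Finset.mem_image]
    constructor
    · rintro ⟨S, ⟨v, hv, rfl⟩, hu⟩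
      rw [SimpleGraph.singletonSubgraph_verts] at hu
      rw [Finset.mem_coe]
      rwa [hu]
    · intro hu
      exact ⟨(graph d).singletonSubgraph u, ⟨u, Finset.mem_coe.mp hu, rfl⟩, rfl⟩
  have hdis : Disconnects (graph d) (⋃ S ∈ F, S.verts) := by
    rw [hFunion]
    exact disconnects_Nset hd
  have hstruct_mem : (d + 2) ∈ {k | ∃ F : Finset ((graph d).Subgraph), F.card = k ∧
      (∀ S ∈ F, Nonempty (S.coe ≃g star 0)) ∧
      Disconnects (graph d) (⋃ S ∈ F, S.verts)} := by
    refine ⟨F, hFcard, ?_, hdis⟩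
    intro S hS
    rw [hFdef, Finset.mem_image] at hS
    obtain ⟨v, _, rfl⟩ := hS
    exact singleton_coe_iso_star _ v
  have hsub_mem : (d + 2) ∈ {k | ∃ F : Finset ((graph d).Subgraph), F.card = k ∧
      (∀ S ∈ F, S.coe.Connected ∧ ∃ H' : (star 0).Subgraph, Nonempty (S.coe ≃g H'.coe)) ∧
      Disconnects (graph d) (⋃ S ∈ F, S.verts)} := by
    refine ⟨F, hFcard, ?_, hdis⟩
    intro S hS
    rw [hFdef, Finset.mem_image] at hS
    obtain ⟨v, _, rfl⟩ := hS
    exact ⟨SimpleGraph.Subgraph.singletonSubgraph_connected.coe, (star 0).singletonSubgraph 0,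
      singleton_coe_iso_sub _ v⟩
  constructor
  · rw [structConn]
    refine le_antisymm (Nat.sInf_le hstruct_mem) (le_csInf ⟨_, hstruct_mem⟩ ?_)
    rintro k ⟨F', hF'card, hiso, hdis'⟩
    exact lower_bound hd F' hF'card
      (fun S hS => le_of_eq (verts_ncard_of_iso_star (hiso S hS))) hdis'
  · rw [substructConn]
    refine le_antisymm (Nat.sInf_le hsub_mem) (le_csInf ⟨_, hsub_mem⟩ ?_)
    rintro k ⟨F', hF'card, hiso, hdis'⟩
    exact lower_bound hd F' hF'card
      (fun S hS => verts_ncard_of_iso_sub (hiso S hS).2) hdis'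

end FDSC
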